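/- arXiv:2211.07265 — 3 statements merged into one kernel-verified Lean document; each statement's English description precedes it below -/
import Mathlib

section
/- For finite nonnegative measures μ ≪ ν on a compact metric space X, the relative entropy satisfies the dual (variational) formula Ent(μ|ν) = sup over continuous functions φ on X of ∫ φ dμ − ∫ (e^φ − 1) dν. -/
open MeasureTheory
open scoped ENNReal

/-- Relative entropy `Ent(μ|ν) = ∫ (f log f − f + 1) dν` for `f = dμ/dν`. -/
noncomputable def relEntropy {α : Type*} [MeasurableSpace α] (μ ν : Measure α) : ℝ≥0∞ :=
  ∫⁻ x, ENNReal.ofReal ((μ.rnDeriv ν x).toReal * Real.log ((μ.rnDeriv ν x).toReal)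
      - (μ.rnDeriv ν x).toReal + 1) ∂ν

/-
Pointwise this is the Legendre duality `t log t - t + 1 = sup_s (t s - (e^s - 1))`, with the
supremum attained at `s = log t`. Writing `f = dμ/dν`, we get
`∫ φ dμ - ∫ (e^φ - 1) dν = ∫ (f φ - (e^φ - 1)) dν`, which is at most `Ent(μ|ν)` for every bounded
measurable `φ`. Conversely, the truncations of `log f` to `[-n, n]` make the integrand nonnegative
and converge to `f log f - f + 1`, so Fatou's lemma recovers `Ent(μ|ν)` from bounded measurable
`φ`. Finally, a measurable `φ` with `|φ| ≤ C` is approximated in `L¹(μ + ν)` by continuous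
functions with the same bound; as `exp` is `e^C`-Lipschitz on `(-∞, C]`, the dual functional
moves by at most `(1 + e^C)` times the `L¹` distance.
-/

open Filter Topology

noncomputable def entropyDual {α : Type*} [MeasurableSpace α] (μ ν : Measure α) (φ : α → ℝ) :
    ℝ :=
  ∫ x, φ x ∂μ - ∫ x, (Real.exp (φ x) - 1) ∂ν

namespace Real

theorem young_inequality_exp_log {t : ℝ} (s : ℝ) (ht : 0 ≤ t) :
    t * s - (exp s - 1) ≤ t * log t - t + 1 := by
  rcases ht.eq_or_lt with rfl | ht
  · simp [(exp_pos s).le]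
  · have h := add_one_le_exp (s - log t)
    rw [exp_sub, exp_log ht, le_div_iff₀ ht] at h
    nlinarith

theorem mul_sub_exp_sub_one_nonneg {s t : ℝ} (h : 0 ≤ s * (t - exp s)) :
    0 ≤ t * s - (exp s - 1) := by
  have h1 : (-s + 1) * exp s ≤ 1 := by
    simpa [← exp_add] using mul_le_mul_of_nonneg_right (add_one_le_exp (-s)) (exp_pos s).le
  nlinarith

theorem exp_sub_exp_le_exp_mul_abs_sub {a b C : ℝ} (ha : a ≤ C) :
    exp a - exp b ≤ exp C * |a - b| := by
  rcases le_total a b with hab | hab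
  · nlinarith [exp_le_exp.mpr hab, abs_nonneg (a - b), exp_pos C]
  · have h : (b - a + 1) * exp a ≤ exp b := by
      simpa [← exp_add] using mul_le_mul_of_nonneg_right (add_one_le_exp (b - a)) (exp_pos a).le
    rw [abs_of_nonneg (sub_nonneg.mpr hab)]
    nlinarith [mul_nonneg (sub_nonneg.mpr (exp_le_exp.mpr ha)) (sub_nonneg.mpr hab)]

end Real

open Real

/-- `log t` clamped to `[-n, n]`; the `max` makes it `-n` rather than the junk `log 0 = 0` at
`t = 0`. -/
noncomputable def truncLog (n : ℕ) (t : ℝ) : ℝ :=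
  min (n : ℝ) (log (max t (exp (-n))))

theorem abs_truncLog_le (n : ℕ) (t : ℝ) : |truncLog n t| ≤ n := by
  have hlog : -(n : ℝ) ≤ log (max t (exp (-n))) := by
    simpa using log_le_log (exp_pos _) (le_max_right t _)
  exact abs_le.mpr ⟨le_min (by linarith [n.cast_nonneg (α := ℝ)]) hlog, min_le_left _ _⟩

theorem measurable_truncLog (n : ℕ) : Measurable (truncLog n) := by
  unfold truncLog
  fun_prop

theorem truncLog_zero (n : ℕ) : truncLog n 0 = -n := by
  rw [truncLog, max_eq_right (exp_pos _).le, log_exp]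
  exact min_eq_right (by linarith [n.cast_nonneg (α := ℝ)])

theorem truncLog_eq_log {n : ℕ} {t : ℝ} (ht : 0 < t) (hn : |log t| ≤ n) :
    truncLog n t = log t := by
  have hexp : exp (-n) ≤ t := by
    rw [← exp_log ht]
    exact exp_le_exp.mpr (abs_le.mp hn).1
  rw [truncLog, max_eq_left hexp]
  exact min_eq_right (abs_le.mp hn).2

theorem mul_truncLog_sub_exp_sub_one_nonneg (n : ℕ) (t : ℝ) :
    0 ≤ t * truncLog n t - (exp (truncLog n t) - 1) := by
  apply mul_sub_exp_sub_one_nonneg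
  rcases le_total t 1 with ht1 | ht1
  · have hpos : 0 < max t (exp (-n)) := lt_max_of_lt_right (exp_pos _)
    have hle : max t (exp (-n)) ≤ 1 :=
      max_le ht1 (exp_le_one_iff.mpr (neg_nonpos.mpr n.cast_nonneg))
    have hlog : log (max t (exp (-n))) ≤ 0 := log_nonpos hpos.le hle
    have heq : truncLog n t = log (max t (exp (-n))) := min_eq_right (hlog.trans n.cast_nonneg)
    rw [heq, exp_log hpos]
    exact mul_nonneg_of_nonpos_of_nonpos hlog (sub_nonpos.mpr (le_max_left _ _))
  · have hexp : exp (-n) ≤ t := (exp_le_one_iff.mpr (neg_nonpos.mpr n.cast_nonneg)).trans ht1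
    have heq : truncLog n t = min (n : ℝ) (log t) := by rw [truncLog, max_eq_left hexp]
    have hpos : 0 < t := one_pos.trans_le ht1
    rw [heq]
    refine mul_nonneg (le_min n.cast_nonneg (log_nonneg ht1)) (sub_nonneg.mpr ?_)
    calc exp (min (n : ℝ) (log t)) ≤ exp (log t) := exp_le_exp.mpr (min_le_right _ _)
      _ = t := exp_log hpos

theorem tendsto_mul_truncLog_sub_exp_sub_one {t : ℝ} (ht : 0 ≤ t) :
    Tendsto (fun n : ℕ => t * truncLog n t - (exp (truncLog n t) - 1)) atTop
      (𝓝 (t * log t - t + 1)) := by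
  rcases ht.eq_or_lt with rfl | ht
  · have h := ((tendsto_exp_neg_atTop_nhds_zero.comp tendsto_natCast_atTop_atTop).sub_const 1).neg
    simpa [truncLog_zero] using h
  · refine tendsto_const_nhds.congr' ?_
    filter_upwards [tendsto_natCast_atTop_atTop.eventually_ge_atTop |log t|] with n hn
    rw [truncLog_eq_log ht hn, exp_log ht]
    ring

section Integrals

variable {α : Type*} [MeasurableSpace α] {μ ν : Measure α} {φ ψ : α → ℝ} {C : ℝ}

theorem integrable_of_abs_le [IsFiniteMeasure μ] (hm : Measurable φ) (hC : ∀ x, |φ x| ≤ C) :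
    Integrable φ μ :=
  .of_bound hm.aestronglyMeasurable C (.of_forall hC)

theorem integrable_exp_sub_one_of_abs_le [IsFiniteMeasure μ] (hm : Measurable φ)
    (hC : ∀ x, |φ x| ≤ C) : Integrable (fun x => exp (φ x) - 1) μ := by
  refine (integrable_of_abs_le (C := exp C) hm.exp fun x => ?_).sub (integrable_const 1)
  rw [abs_of_pos (exp_pos _)]
  exact exp_le_exp.mpr (abs_le.mp (hC x)).2

theorem ofReal_integral_le_lintegral_ofReal {f : α → ℝ} (hf : Integrable f μ) :
    ENNReal.ofReal (∫ x, f x ∂μ) ≤ ∫⁻ x, ENNReal.ofReal (f x) ∂μ := by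
  refine ENNReal.ofReal_le_of_le_toReal ?_
  rw [integral_eq_lintegral_pos_part_sub_lintegral_neg_part hf]
  exact sub_le_self _ ENNReal.toReal_nonneg

variable [IsFiniteMeasure μ] [IsFiniteMeasure ν]

theorem integrable_toReal_rnDeriv_mul_sub_exp_sub_one (hac : μ ≪ ν) (hm : Measurable φ)
    (hC : ∀ x, |φ x| ≤ C) :
    Integrable (fun x => (μ.rnDeriv ν x).toReal * φ x - (exp (φ x) - 1)) ν :=
  ((integrable_toReal_rnDeriv_mul_iff hac).mpr (integrable_of_abs_le hm hC)).sub
    (integrable_exp_sub_one_of_abs_le hm hC)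

theorem entropyDual_eq_integral (hac : μ ≪ ν) (hm : Measurable φ) (hC : ∀ x, |φ x| ≤ C) :
    entropyDual μ ν φ = ∫ x, ((μ.rnDeriv ν x).toReal * φ x - (exp (φ x) - 1)) ∂ν := by
  rw [entropyDual, integral_sub ((integrable_toReal_rnDeriv_mul_iff hac).mpr
    (integrable_of_abs_le hm hC)) (integrable_exp_sub_one_of_abs_le hm hC),
    ← integral_rnDeriv_smul hac]
  rfl

theorem ofReal_entropyDual_le_relEntropy (hac : μ ≪ ν) (hm : Measurable φ)
    (hC : ∀ x, |φ x| ≤ C) : ENNReal.ofReal (entropyDual μ ν φ) ≤ relEntropy μ ν := by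
  rw [entropyDual_eq_integral hac hm hC]
  refine (ofReal_integral_le_lintegral_ofReal
    (integrable_toReal_rnDeriv_mul_sub_exp_sub_one hac hm hC)).trans ?_
  exact lintegral_mono fun x =>
    ENNReal.ofReal_le_ofReal (young_inequality_exp_log _ ENNReal.toReal_nonneg)

theorem relEntropy_le_of_forall_bounded (hac : μ ≪ ν) {S : ℝ≥0∞}
    (h : ∀ (φ : α → ℝ) (C : ℝ), Measurable φ → (∀ x, |φ x| ≤ C) →
      ENNReal.ofReal (entropyDual μ ν φ) ≤ S) :
    relEntropy μ ν ≤ S := by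
  set f : α → ℝ := fun x => (μ.rnDeriv ν x).toReal
  have hf : Measurable f := (μ.measurable_rnDeriv ν).ennreal_toReal
  have hφ_meas (n : ℕ) : Measurable (truncLog n ∘ f) := (measurable_truncLog n).comp hf
  have hφ_bdd (n : ℕ) (x : α) : |truncLog n (f x)| ≤ n := abs_truncLog_le n (f x)
  set g : ℕ → α → ℝ≥0∞ := fun n x =>
    ENNReal.ofReal (f x * truncLog n (f x) - (exp (truncLog n (f x)) - 1))
  have hg_meas (n : ℕ) : Measurable (g n) :=
    ((hf.mul (hφ_meas n)).sub ((hφ_meas n).exp.sub measurable_const)).ennreal_ofReal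
  have hg_lim (x : α) :
      Tendsto (g · x) atTop (𝓝 (ENNReal.ofReal (f x * log (f x) - f x + 1))) :=
    (ENNReal.continuous_ofReal.tendsto _).comp
      (tendsto_mul_truncLog_sub_exp_sub_one ENNReal.toReal_nonneg)
  have hg_int (n : ℕ) :
      ∫⁻ x, g n x ∂ν = ENNReal.ofReal (entropyDual μ ν (truncLog n ∘ f)) := by
    rw [entropyDual_eq_integral hac (hφ_meas n) (hφ_bdd n),
      ofReal_integral_eq_lintegral_ofReal
        (integrable_toReal_rnDeriv_mul_sub_exp_sub_one hac (hφ_meas n) (hφ_bdd n))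
        (.of_forall fun x => mul_truncLog_sub_exp_sub_one_nonneg n _)]
    rfl
  calc relEntropy μ ν = ∫⁻ x, liminf (g · x) atTop ∂ν :=
        lintegral_congr fun x => (hg_lim x).liminf_eq.symm
    _ ≤ liminf (fun n => ∫⁻ x, g n x ∂ν) atTop := lintegral_liminf_le hg_meas
    _ ≤ S := liminf_le_of_frequently_le' <| .of_forall fun n =>
        (hg_int n).trans_le (h _ _ (hφ_meas n) (hφ_bdd n))

theorem entropyDual_le_add_integral_abs_sub (hφm : Measurable φ) (hφ : ∀ x, |φ x| ≤ C)
    (hψm : Measurable ψ) (hψ : ∀ x, |ψ x| ≤ C) :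
    entropyDual μ ν φ ≤ entropyDual μ ν ψ + (1 + exp C) * ∫ x, |φ x - ψ x| ∂(μ + ν) := by
  have hdiff (m : Measure α) [IsFiniteMeasure m] : Integrable (fun x => |φ x - ψ x|) m :=
    ((integrable_of_abs_le hφm hφ).sub (integrable_of_abs_le hψm hψ)).abs
  have hμ : ∫ x, φ x ∂μ - ∫ x, ψ x ∂μ ≤ ∫ x, |φ x - ψ x| ∂μ := by
    rw [← integral_sub (integrable_of_abs_le hφm hφ) (integrable_of_abs_le hψm hψ)]
    exact integral_mono ((integrable_of_abs_le hφm hφ).sub (integrable_of_abs_le hψm hψ))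
      (hdiff μ) fun x => le_abs_self _
  have hν : ∫ x, (exp (ψ x) - 1) ∂ν - ∫ x, (exp (φ x) - 1) ∂ν
      ≤ exp C * ∫ x, |φ x - ψ x| ∂ν := by
    rw [← integral_sub (integrable_exp_sub_one_of_abs_le hψm hψ)
      (integrable_exp_sub_one_of_abs_le hφm hφ), ← integral_const_mul]
    refine integral_mono ((integrable_exp_sub_one_of_abs_le hψm hψ).sub
      (integrable_exp_sub_one_of_abs_le hφm hφ)) ((hdiff ν).const_mul _) fun x => ?_
    have := exp_sub_exp_le_exp_mul_abs_sub (b := φ x) (abs_le.mp (hψ x)).2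
    rw [abs_sub_comm] at this
    dsimp only
    linarith
  have hμ0 : 0 ≤ ∫ x, |φ x - ψ x| ∂μ := integral_nonneg fun _ => abs_nonneg _
  have hν0 : 0 ≤ ∫ x, |φ x - ψ x| ∂ν := integral_nonneg fun _ => abs_nonneg _
  rw [integral_add_measure (hdiff μ) (hdiff ν)]
  unfold entropyDual
  nlinarith [mul_nonneg (exp_pos C).le hμ0]

end Integrals

section Continuous

variable {X : Type*} [TopologicalSpace X] [NormalSpace X] [MeasurableSpace X] [BorelSpace X]
  {φ : X → ℝ} {C : ℝ}

theorem exists_continuous_abs_le_integral_abs_sub_le {ρ : Measure X} [IsFiniteMeasure ρ]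
    [ρ.WeaklyRegular] (hm : Measurable φ) (hC : ∀ x, |φ x| ≤ C) {ε : ℝ} (hε : 0 < ε) :
    ∃ ψ : C(X, ℝ), (∀ x, |ψ x| ≤ C) ∧ ∫ x, |φ x - ψ x| ∂ρ ≤ ε := by
  obtain ⟨g, hg, hg_int⟩ :=
    (integrable_of_abs_le (μ := ρ) hm hC).exists_boundedContinuous_integral_sub_le hε
  let ψ : C(X, ℝ) := ⟨fun x => max (min (g x) C) (-C), by fun_prop⟩
  have hψ (x : X) : |ψ x| ≤ C := abs_le.mpr ⟨le_max_right _ _,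
    max_le (min_le_right _ _) (by linarith [(abs_nonneg _).trans (hC x)])⟩
  have hψφ (x : X) : |φ x - ψ x| ≤ ‖φ x - g x‖ := by
    obtain ⟨hlo, hhi⟩ := abs_le.mp (hC x)
    calc |φ x - ψ x| = |max (min (φ x) C) (-C) - max (min (g x) C) (-C)| := by
          rw [min_eq_left hhi, max_eq_left hlo]; rfl
      _ ≤ |min (φ x) C - min (g x) C| := abs_max_sub_max_le_abs _ _ _
      _ ≤ ‖φ x - g x‖ := by simpa using abs_min_sub_min_le_max (φ x) C (g x) C
  refine ⟨ψ, hψ, (integral_mono ?_ ?_ hψφ).trans hg⟩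
  · exact ((integrable_of_abs_le hm hC).sub
      (integrable_of_abs_le ψ.continuous.measurable hψ)).abs
  · exact ((integrable_of_abs_le hm hC).sub hg_int).norm

theorem ofReal_entropyDual_le_iSup_continuous {μ ν : Measure X} [IsFiniteMeasure μ]
    [IsFiniteMeasure ν] [(μ + ν).WeaklyRegular] (hm : Measurable φ) (hC : ∀ x, |φ x| ≤ C) :
    ENNReal.ofReal (entropyDual μ ν φ) ≤
      ⨆ ψ : C(X, ℝ), ENNReal.ofReal (entropyDual μ ν ψ) := by
  refine ENNReal.le_of_forall_pos_le_add fun ε hε _ => ?_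
  have hC1 : 0 < 1 + exp C := by positivity
  obtain ⟨ψ, hψ, hψφ⟩ := exists_continuous_abs_le_integral_abs_sub_le (ρ := μ + ν) hm hC
    (div_pos (NNReal.coe_pos.mpr hε) hC1)
  have key : entropyDual μ ν φ ≤ entropyDual μ ν ψ + ε :=
    calc entropyDual μ ν φ
        ≤ entropyDual μ ν ψ + (1 + exp C) * ∫ x, |φ x - ψ x| ∂(μ + ν) :=
          entropyDual_le_add_integral_abs_sub hm hC ψ.continuous.measurable hψ
      _ ≤ entropyDual μ ν ψ + (1 + exp C) * (ε / (1 + exp C)) := by gcongr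
      _ = entropyDual μ ν ψ + ε := by field_simp
  calc ENNReal.ofReal (entropyDual μ ν φ) ≤ ENNReal.ofReal (entropyDual μ ν ψ) + ε := by
        simpa using (ENNReal.ofReal_le_ofReal key).trans ENNReal.ofReal_add_le
    _ ≤ (⨆ ψ : C(X, ℝ), ENNReal.ofReal (entropyDual μ ν ψ)) + ε := by
        gcongr
        exact le_iSup (fun ψ : C(X, ℝ) => ENNReal.ofReal (entropyDual μ ν ψ)) ψ

end Continuous

/-- dual (variational) formula for the relative entropy on a compact
metric space: `Ent(μ|ν) = sup_{φ ∈ C(X)} ∫ φ dμ − ∫ (e^φ − 1) dν`. -/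
theorem stmt2 {X : Type*} [MetricSpace X] [CompactSpace X]
    [MeasurableSpace X] [BorelSpace X]
    (μ ν : Measure X) [IsFiniteMeasure μ] [IsFiniteMeasure ν] (hac : μ ≪ ν) :
    relEntropy μ ν
      = ⨆ φ : C(X, ℝ),
          ENNReal.ofReal ((∫ x, φ x ∂μ) - ∫ x, (Real.exp (φ x) - 1) ∂ν) := by
  refine le_antisymm ?_ (iSup_le fun φ => ?_)
  · exact relEntropy_le_of_forall_bounded hac fun φ C hm hC =>
      ofReal_entropyDual_le_iSup_continuous hm hC
  · exact ofReal_entropyDual_le_relEntropy hac φ.continuous.measurable φ.norm_coe_le_norm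
end

section
/- For any finite nonnegative measures μ ≪ ν on a compact metric space X, the total variation norm satisfies ‖μ‖_TV ≤ Ent(μ|λν) + λ(e−1)·ν(X) for any λ > 0, where Ent(μ|λν) is the relative entropy of μ with respect to the scaled measure λν. -/
open MeasureTheory
open scoped ENNReal

lemma key_real (s : ℝ) (hs : 0 ≤ s) :
    s ≤ (s * Real.log s - s + 1) + (Real.exp 1 - 1) := by
  rcases eq_or_lt_of_le hs with h | h
  · simp [← h]; positivity
  · have h1 : Real.log (Real.exp 1 / s) ≤ Real.exp 1 / s - 1 :=
      Real.log_le_sub_one_of_pos (by positivity)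
    rw [Real.log_div (Real.exp_ne_zero 1) h.ne', Real.log_exp] at h1
    have h2 : s * (1 - Real.log s) ≤ s * (Real.exp 1 / s - 1) :=
      mul_le_mul_of_nonneg_left h1 hs
    have h3 : s * (Real.exp 1 / s) = Real.exp 1 := mul_div_cancel₀ _ h.ne'
    nlinarith

/-- for finite nonnegative measures `μ ≪ ν` on a compact metric space and
any `λ > 0`, the total variation norm of `μ` (which equals `μ(X)`) satisfies
`‖μ‖_TV ≤ Ent(μ | λν) + λ(e−1)·ν(X)`. -/
theorem stmt3 {X : Type*} [MetricSpace X] [CompactSpace X]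
    [MeasurableSpace X] [BorelSpace X]
    (μ ν : Measure X) [IsFiniteMeasure μ] [IsFiniteMeasure ν] (hac : μ ≪ ν)
    (l : ℝ) (hl : 0 < l) :
    μ Set.univ
      ≤ relEntropy μ (ENNReal.ofReal l • ν)
        + ENNReal.ofReal (l * (Real.exp 1 - 1)) * ν Set.univ := by
  set ν' : Measure X := ENNReal.ofReal l • ν with hν'
  have hl' : (ENNReal.ofReal l) ≠ 0 := by
    simp [ENNReal.ofReal_eq_zero, not_le, hl]
  have hνν' : ν ≪ ν' := by
    intro s hs
    rw [hν', Measure.smul_apply, smul_eq_mul] at hs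
    simpa [hl'] using hs
  have hac' : μ ≪ ν' := hac.trans hνν'
  have : IsFiniteMeasure ν' := ⟨by
    rw [hν', Measure.smul_apply, smul_eq_mul]
    exact ENNReal.mul_lt_top ENNReal.ofReal_lt_top (measure_lt_top ν _)⟩
  have hlin : ∫⁻ x, μ.rnDeriv ν' x ∂ν' = μ Set.univ := Measure.lintegral_rnDeriv hac'
  have hfin : ∀ᵐ x ∂ν', μ.rnDeriv ν' x < ∞ := Measure.rnDeriv_lt_top μ ν'
  have hpt : ∀ᵐ x ∂ν', μ.rnDeriv ν' x ≤
      ENNReal.ofReal ((μ.rnDeriv ν' x).toReal * Real.log ((μ.rnDeriv ν' x).toReal)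
        - (μ.rnDeriv ν' x).toReal + 1) + ENNReal.ofReal (Real.exp 1 - 1) := by
    filter_upwards [hfin] with x hx
    set s := (μ.rnDeriv ν' x).toReal with hsd
    have hsnn : 0 ≤ s := ENNReal.toReal_nonneg
    calc μ.rnDeriv ν' x = ENNReal.ofReal s := by
          rw [hsd, ENNReal.ofReal_toReal hx.ne]
      _ ≤ ENNReal.ofReal ((s * Real.log s - s + 1) + (Real.exp 1 - 1)) :=
          ENNReal.ofReal_le_ofReal (key_real s hsnn)
      _ ≤ _ := ENNReal.ofReal_add_le
  calc μ Set.univ = ∫⁻ x, μ.rnDeriv ν' x ∂ν' := hlin.symm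
    _ ≤ ∫⁻ x, (ENNReal.ofReal ((μ.rnDeriv ν' x).toReal * Real.log ((μ.rnDeriv ν' x).toReal)
          - (μ.rnDeriv ν' x).toReal + 1) + ENNReal.ofReal (Real.exp 1 - 1)) ∂ν' :=
        lintegral_mono_ae hpt
    _ = relEntropy μ ν' + ENNReal.ofReal (Real.exp 1 - 1) * ν' Set.univ := by
        rw [lintegral_add_right _ measurable_const, lintegral_const]
        rfl
    _ = relEntropy μ ν' + ENNReal.ofReal (l * (Real.exp 1 - 1)) * ν Set.univ := by
        rw [hν', Measure.smul_apply, smul_eq_mul, ENNReal.ofReal_mul hl.le]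
        ring
end

section
/- The Fisher information η ↦ FI(η|π) = (1/2) ∫ (√(dη/dπ ∘ ι) − √(dη/dπ))² dπ is a convex function on the set of probability measures absolutely continuous with respect to π. -/
open MeasureTheory
open scoped ENNReal

/-- The velocity-reversal map `ι(x,v) = (x,−v)` on `Ω = X × {-1,1}`,
with the two-point velocity space modelled by `Bool`. -/
def velRev {X : Type*} (p : X × Bool) : X × Bool := (p.1, !p.2)

/-- The Fisher information `FI(η|π) = (1/2) ∫ (√(dη/dπ ∘ ι) − √(dη/dπ))² dπ`. -/
noncomputable def fisherInfo {X : Type*} [MeasurableSpace X]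
    (π η : Measure (X × Bool)) : ℝ :=
  (1/2) * ∫ p, (Real.sqrt ((η.rnDeriv π (velRev p)).toReal)
      - Real.sqrt ((η.rnDeriv π p).toReal)) ^ 2 ∂π

lemma velRev_measurable {X : Type*} [MeasurableSpace X] : Measurable (velRev (X := X)) :=
  measurable_fst.prodMk ((Measurable.of_discrete (f := not)).comp measurable_snd)

lemma sqrt_sub_sq_convex {a b c d t s : ℝ} (ha : 0 ≤ a) (hb : 0 ≤ b) (hc : 0 ≤ c)
    (hd : 0 ≤ d) (ht : 0 ≤ t) (hs : 0 ≤ s) :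
    (Real.sqrt (t*a + s*b) - Real.sqrt (t*c + s*d))^2
      ≤ t * (Real.sqrt a - Real.sqrt c)^2 + s * (Real.sqrt b - Real.sqrt d)^2 := by
  have hA : (0:ℝ) ≤ t*a + s*b := by positivity
  have hB : (0:ℝ) ≤ t*c + s*d := by positivity
  have hu := Real.sq_sqrt hA
  have hv := Real.sq_sqrt hB
  have hsa := Real.sq_sqrt ha
  have hsb := Real.sq_sqrt hb
  have hsc := Real.sq_sqrt hc
  have hsd := Real.sq_sqrt hd
  set u := Real.sqrt (t*a + s*b)
  set v := Real.sqrt (t*c + s*d)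
  set sa := Real.sqrt a
  set sb := Real.sqrt b
  set sc := Real.sqrt c
  set sd := Real.sqrt d
  have hu0 : 0 ≤ u := Real.sqrt_nonneg _
  have hv0 : 0 ≤ v := Real.sqrt_nonneg _
  have hsa0 : 0 ≤ sa := Real.sqrt_nonneg _
  have hsb0 : 0 ≤ sb := Real.sqrt_nonneg _
  have hsc0 : 0 ≤ sc := Real.sqrt_nonneg _
  have hsd0 : 0 ≤ sd := Real.sqrt_nonneg _
  have key : t * (sa * sc) + s * (sb * sd) ≤ u * v := by
    have h0 : 0 ≤ t * (sa * sc) + s * (sb * sd) := by positivity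
    have huv : (u * v)^2 = (t*sa^2 + s*sb^2) * (t*sc^2 + s*sd^2) := by
      rw [mul_pow, hu, hv, hsa, hsb, hsc, hsd]
    have hsq : (t * (sa * sc) + s * (sb * sd))^2 ≤ (u * v)^2 := by
      nlinarith [mul_nonneg (mul_nonneg ht hs) (sq_nonneg (sa*sd - sb*sc))]
    exact (pow_le_pow_iff_left₀ h0 (mul_nonneg hu0 hv0) two_ne_zero).mp hsq
  nlinarith [key]

lemma fisher_meas {X : Type*} [MeasurableSpace X] (π η : Measure (X × Bool)) :
    Measurable (fun p => (Real.sqrt ((η.rnDeriv π (velRev p)).toReal)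
      - Real.sqrt ((η.rnDeriv π p).toReal)) ^ 2) := by
  have hm : Measurable fun p : X × Bool => (η.rnDeriv π p).toReal :=
    (Measure.measurable_rnDeriv η π).ennreal_toReal
  exact (((hm.comp velRev_measurable).sqrt.sub hm.sqrt).pow_const 2)

lemma fisher_integrable {X : Type*} [MeasurableSpace X] (π η : Measure (X × Bool))
    [IsFiniteMeasure η] [IsFiniteMeasure π] (hmp : MeasurePreserving (velRev (X := X)) π π) :
    Integrable (fun p => (Real.sqrt ((η.rnDeriv π (velRev p)).toReal)
      - Real.sqrt ((η.rnDeriv π p).toReal)) ^ 2) π := by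
  have hint : Integrable (fun p => (η.rnDeriv π p).toReal) π :=
    Measure.integrable_toReal_rnDeriv
  have hint2 : Integrable (fun p => (η.rnDeriv π (velRev p)).toReal) π :=
    (hmp.integrable_comp hint.aestronglyMeasurable).mpr hint
  refine (hint2.add hint).mono' (fisher_meas π η).aestronglyMeasurable ?_
  filter_upwards with p
  have hx : (0:ℝ) ≤ (η.rnDeriv π (velRev p)).toReal := ENNReal.toReal_nonneg
  have hy : (0:ℝ) ≤ (η.rnDeriv π p).toReal := ENNReal.toReal_nonneg
  rw [Real.norm_eq_abs, abs_of_nonneg (sq_nonneg _)]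
  simp only [Pi.add_apply]
  nlinarith [Real.sq_sqrt hx, Real.sq_sqrt hy, Real.sqrt_nonneg ((η.rnDeriv π (velRev p)).toReal),
    Real.sqrt_nonneg ((η.rnDeriv π p).toReal),
    mul_nonneg (Real.sqrt_nonneg ((η.rnDeriv π (velRev p)).toReal))
      (Real.sqrt_nonneg ((η.rnDeriv π p).toReal))]

/-- the Fisher information `η ↦ FI(η|π)` is convex on the set of
probability measures absolutely continuous with respect to `π`. -/
theorem stmt5 {X : Type*} [MeasurableSpace X] (π η₁ η₂ : Measure (X × Bool))
    [IsProbabilityMeasure π] [IsProbabilityMeasure η₁] [IsProbabilityMeasure η₂]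
    (hinv : Measure.map (velRev (X := X)) π = π)
    (h1 : η₁ ≪ π) (h2 : η₂ ≪ π)
    (t : ℝ) (ht0 : 0 ≤ t) (ht1 : t ≤ 1) :
    fisherInfo π (ENNReal.ofReal t • η₁ + ENNReal.ofReal (1 - t) • η₂)
      ≤ t * fisherInfo π η₁ + (1 - t) * fisherInfo π η₂ := by
  have hs0 : (0:ℝ) ≤ 1 - t := by linarith
  have hmp : MeasurePreserving (velRev (X := X)) π π := ⟨velRev_measurable, hinv⟩
  haveI hfin1 : IsFiniteMeasure (ENNReal.ofReal t • η₁) := by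
    refine ⟨?_⟩
    rw [Measure.smul_apply, smul_eq_mul, measure_univ, mul_one]
    exact ENNReal.ofReal_lt_top
  haveI hfin2 : IsFiniteMeasure (ENNReal.ofReal (1 - t) • η₂) := by
    refine ⟨?_⟩
    rw [Measure.smul_apply, smul_eq_mul, measure_univ, mul_one]
    exact ENNReal.ofReal_lt_top
  set η := ENNReal.ofReal t • η₁ + ENNReal.ofReal (1 - t) • η₂ with hηdef
  have hadd := Measure.rnDeriv_add (ENNReal.ofReal t • η₁) (ENNReal.ofReal (1 - t) • η₂) π
  have hsm1 := Measure.rnDeriv_smul_left_of_ne_top η₁ π (r := ENNReal.ofReal t) ENNReal.ofReal_ne_top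
  have hsm2 := Measure.rnDeriv_smul_left_of_ne_top η₂ π (r := ENNReal.ofReal (1 - t)) ENNReal.ofReal_ne_top
  have hlt1 := Measure.rnDeriv_lt_top η₁ π
  have hlt2 := Measure.rnDeriv_lt_top η₂ π
  have haeq : ∀ᵐ p ∂π, (η.rnDeriv π p).toReal
      = t * (η₁.rnDeriv π p).toReal + (1 - t) * (η₂.rnDeriv π p).toReal := by
    filter_upwards [hadd, hsm1, hsm2, hlt1, hlt2] with p ha hb hc hd he
    rw [ha, Pi.add_apply, hb, hc, Pi.smul_apply, Pi.smul_apply, smul_eq_mul, smul_eq_mul,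
      ENNReal.toReal_add (ENNReal.mul_ne_top ENNReal.ofReal_ne_top hd.ne)
        (ENNReal.mul_ne_top ENNReal.ofReal_ne_top he.ne),
      ENNReal.toReal_mul, ENNReal.toReal_mul, ENNReal.toReal_ofReal ht0,
      ENNReal.toReal_ofReal hs0]
  have haeq' : ∀ᵐ p ∂π, (η.rnDeriv π (velRev p)).toReal
      = t * (η₁.rnDeriv π (velRev p)).toReal + (1 - t) * (η₂.rnDeriv π (velRev p)).toReal :=
    hmp.quasiMeasurePreserving.tendsto_ae.eventually haeq
  have hpt : ∀ᵐ p ∂π,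
      (Real.sqrt ((η.rnDeriv π (velRev p)).toReal) - Real.sqrt ((η.rnDeriv π p).toReal)) ^ 2
      ≤ t * (Real.sqrt ((η₁.rnDeriv π (velRev p)).toReal)
              - Real.sqrt ((η₁.rnDeriv π p).toReal)) ^ 2
        + (1 - t) * (Real.sqrt ((η₂.rnDeriv π (velRev p)).toReal)
              - Real.sqrt ((η₂.rnDeriv π p).toReal)) ^ 2 := by
    filter_upwards [haeq, haeq'] with p h h'
    rw [h, h']
    exact sqrt_sub_sq_convex ENNReal.toReal_nonneg ENNReal.toReal_nonneg
      ENNReal.toReal_nonneg ENNReal.toReal_nonneg ht0 hs0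
  have hG1 := fisher_integrable π η₁ hmp
  have hG2 := fisher_integrable π η₂ hmp
  have hRHS : Integrable (fun p =>
      t * (Real.sqrt ((η₁.rnDeriv π (velRev p)).toReal)
            - Real.sqrt ((η₁.rnDeriv π p).toReal)) ^ 2
      + (1 - t) * (Real.sqrt ((η₂.rnDeriv π (velRev p)).toReal)
            - Real.sqrt ((η₂.rnDeriv π p).toReal)) ^ 2) π :=
    (hG1.const_mul t).add (hG2.const_mul (1 - t))
  have hGη : Integrable (fun p =>
      (Real.sqrt ((η.rnDeriv π (velRev p)).toReal)
        - Real.sqrt ((η.rnDeriv π p).toReal)) ^ 2) π := by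
    refine hRHS.mono' (fisher_meas π η).aestronglyMeasurable ?_
    filter_upwards [hpt] with p hp
    rwa [Real.norm_eq_abs, abs_of_nonneg (sq_nonneg _)]
  have hmono := integral_mono_ae hGη hRHS hpt
  rw [integral_add (hG1.const_mul t) (hG2.const_mul (1 - t)),
    integral_const_mul, integral_const_mul] at hmono
  unfold fisherInfo
  linarith
end
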